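/- The VI-SLAM dynamics are invariant with respect to the reference-frame action α: if t ↦ ξ(t) = (R_B(t), x_B(t), v_B(t), b_B(t), T(t), (p_i(t))) is a differentiable curve in the VI-SLAM total space 𝒯 satisfying Ṙ_B = R_B(Ω − b_B^Ω)^×, ẋ_B = v_B, v̇_B = R_B(a − b_B^a) + g e₃, ḃ_B = 0, Ṫ = 0, ṗ_i = 0 for given constant inputs (Ω, a) ∈ ℝ³ × ℝ³, then for every S ∈ SE_{e₃}(3) the curve t ↦ α(S, ξ(t)) also satisfies the same differential equations. -/

import Mathlib

noncomputable section
open Matrix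

attribute [local instance] Matrix.normedAddCommGroup Matrix.normedSpace

abbrev Mat3 := Matrix (Fin 3) (Fin 3) ℝ
abbrev Vec3 := EuclideanSpace ℝ (Fin 3)

/-- Membership in `SO(3)`. -/
def SO3 (R : Mat3) : Prop := Rᵀ * R = 1 ∧ R.det = 1

/-- The standard gravity direction `e₃ = (0,0,1)`. -/
def e3 : Vec3 := WithLp.toLp 2 (![0, 0, 1] : Fin 3 → ℝ)

/-- Matrix-vector multiplication on `ℝ³`. -/
def mulv (M : Mat3) (v : Vec3) : Vec3 := WithLp.toLp 2 (M.mulVec v)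

/-- The skew-symmetric matrix `ω^×` satisfying `ω^× u = ω × u`. -/
def skew (ω : Vec3) : Mat3 := !![0, -ω 2, ω 1; ω 2, 0, -ω 0; -ω 1, ω 0, 0]

/-- `SE(3)` elements as (rotation, translation) pairs `(R_P, x_P)`. -/
abbrev SE3 := Mat3 × Vec3

def SE3.mul (P Q : SE3) : SE3 := (P.1 * Q.1, P.2 + mulv P.1 Q.2)
def SE3.inv (P : SE3) : SE3 := (P.1ᵀ, -(mulv P.1ᵀ P.2))
def SE3.act (P : SE3) (p : Vec3) : Vec3 := mulv P.1 p + P.2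

/-- Membership in the subgroup `SE_{e₃}(3)`. -/
def SEe3 (S : SE3) : Prop := SO3 S.1 ∧ mulv S.1 e3 = e3

/-! Since `α(S, ·)` is a constant left translation by `S⁻¹`, every derivative is transformed by
the constant linear map `R_Sᵀ`. The only term of the dynamics not of this form is gravity `g e₃`,
which survives because `R_S` is orthogonal and fixes `e₃`. -/

section Derivatives

variable {t : ℝ}

theorem HasDerivAt.matrix_const_mul {l m k : Type*} [Fintype l] [Fintype m] [Fintype k]
    (A : Matrix l m ℝ) {f : ℝ → Matrix m k ℝ} {f' : Matrix m k ℝ} (hf : HasDerivAt f f' t) :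
    HasDerivAt (fun t => A * f t) (A * f') t :=
  (mulLeftLinearMap k ℝ A).toContinuousLinearMap.hasFDerivAt.comp_hasDerivAt t hf

theorem HasDerivAt.const_mulv (A : Mat3) {f : ℝ → Vec3} {f' : Vec3} (hf : HasDerivAt f f' t) :
    HasDerivAt (fun t => mulv A (f t)) (mulv A f') t :=
  (Matrix.toEuclideanCLM (𝕜 := ℝ) A).hasFDerivAt.comp_hasDerivAt t hf

namespace SE3

variable (S : SE3)

theorem hasDerivAt_mul_fst {R : ℝ → Mat3} {R' : Mat3} (x : ℝ → Vec3) (hR : HasDerivAt R R' t) :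
    HasDerivAt (fun t => (S.mul (R t, x t)).1) (S.1 * R') t :=
  hR.matrix_const_mul S.1

theorem hasDerivAt_mul_snd (R : ℝ → Mat3) {x : ℝ → Vec3} {x' : Vec3} (hx : HasDerivAt x x' t) :
    HasDerivAt (fun t => (S.mul (R t, x t)).2) (mulv S.1 x') t :=
  (hx.const_mulv S.1).const_add S.2

theorem hasDerivAt_act {p : ℝ → Vec3} {p' : Vec3} (hp : HasDerivAt p p' t) :
    HasDerivAt (fun t => S.act (p t)) (mulv S.1 p') t :=
  (hp.const_mulv S.1).add_const S.2

end SE3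

end Derivatives

theorem mulv_zero (A : Mat3) : mulv A 0 = 0 := by
  simp [mulv]

theorem mulv_one (v : Vec3) : mulv 1 v = v := by
  simp [mulv]

theorem mulv_add (A : Mat3) (x y : Vec3) : mulv A (x + y) = mulv A x + mulv A y := by
  simp [mulv, Matrix.mulVec_add]

theorem mulv_smul (A : Mat3) (c : ℝ) (x : Vec3) : mulv A (c • x) = c • mulv A x := by
  simp [mulv, Matrix.mulVec_smul]

theorem mulv_mulv (A B : Mat3) (x : Vec3) : mulv A (mulv B x) = mulv (A * B) x := by
  simp [mulv, Matrix.mulVec_mulVec]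

theorem mulv_transpose_eq_of_mulv_eq {R : Mat3} {v : Vec3} (hR : Rᵀ * R = 1)
    (hv : mulv R v = v) : mulv Rᵀ v = v :=
  calc mulv Rᵀ v = mulv (Rᵀ * R) v := by rw [← mulv_mulv, hv]
    _ = v := by rw [hR, mulv_one]

theorem vislam_dynamics_invariant_under_alpha_general
    (n : ℕ) (g : ℝ)
    (Ω a : Vec3)                                   -- constant IMU inputs
    (RB : ℝ → Mat3) (xB vB : ℝ → Vec3)             -- navigation states
    (bΩ ba : ℝ → Vec3)                             -- IMU biases
    (T : ℝ → SE3)                                  -- camera extrinsics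
    (p : Fin n → ℝ → Vec3)                         -- landmarks
    -- the VI-SLAM dynamics :
    (hR : ∀ t, HasDerivAt RB (RB t * skew (Ω - bΩ t)) t)
    (hx : ∀ t, HasDerivAt xB (vB t) t)
    (hv : ∀ t, HasDerivAt vB (mulv (RB t) (a - ba t) + g • e3) t)
    (hbΩ : ∀ t, HasDerivAt bΩ 0 t)
    (hba : ∀ t, HasDerivAt ba 0 t)
    (hT : ∀ t, HasDerivAt T 0 t)
    (hp : ∀ i, ∀ t, HasDerivAt (p i) 0 t)
    -- the change of reference frame :
    (S : SE3) (hS : SEe3 S) :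
    (∀ t, HasDerivAt (fun t => (SE3.mul (SE3.inv S) (RB t, xB t)).1)
      ((SE3.mul (SE3.inv S) (RB t, xB t)).1 * skew (Ω - bΩ t)) t) ∧
    (∀ t, HasDerivAt (fun t => (SE3.mul (SE3.inv S) (RB t, xB t)).2)
      (mulv S.1ᵀ (vB t)) t) ∧
    (∀ t, HasDerivAt (fun t => mulv S.1ᵀ (vB t))
      (mulv (SE3.mul (SE3.inv S) (RB t, xB t)).1 (a - ba t) + g • e3) t) ∧
    (∀ t, HasDerivAt bΩ 0 t) ∧ (∀ t, HasDerivAt ba 0 t) ∧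
    (∀ t, HasDerivAt T 0 t) ∧
    (∀ i, ∀ t, HasDerivAt (fun t => SE3.act (SE3.inv S) (p i t)) 0 t) := by
  obtain ⟨⟨hS_orth, -⟩, hS_e3⟩ := hS
  have gravity_fixed : mulv S.1ᵀ e3 = e3 := mulv_transpose_eq_of_mulv_eq hS_orth hS_e3
  refine ⟨fun t => ?_, fun t => ?_, fun t => ?_, hbΩ, hba, hT, fun i t => ?_⟩
  · exact ((SE3.inv S).hasDerivAt_mul_fst xB (hR t)).congr_deriv (mul_assoc _ _ _).symm
  · exact (SE3.inv S).hasDerivAt_mul_snd RB (hx t)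
  · refine ((hv t).const_mulv S.1ᵀ).congr_deriv ?_
    rw [mulv_add, mulv_smul, mulv_mulv, gravity_fixed]
    rfl
  · exact ((SE3.inv S).hasDerivAt_act (hp i t)).congr_deriv (mulv_zero _)

/-- Invariance of the VI-SLAM dynamics with respect to the
reference-frame action `α`.

If `t ↦ (R_B(t), x_B(t), v_B(t), bΩ(t), ba(t), T(t), p_i(t))` is a differentiable curve
in the VI-SLAM total space `𝒯` satisfying the VI-SLAM dynamics for constant inputs
`(Ω, a)`, then, for any `S ∈ SE_{e₃}(3)`, the transformed curve
`t ↦ α(S, ξ(t)) = (S⁻¹ P_B(t), R_Sᵀ v_B(t), b_B(t), T(t), (S⁻¹ p_i(t)))`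
satisfies the same differential equations. -/
theorem vislam_dynamics_invariant_under_alpha
    (n : ℕ) (hn : 1 ≤ n) (g : ℝ) (hg : 0 < g)
    (Ω a : Vec3)                                   -- constant IMU inputs
    (RB : ℝ → Mat3) (xB vB : ℝ → Vec3)             -- navigation states
    (bΩ ba : ℝ → Vec3)                             -- IMU biases
    (T : ℝ → SE3)                                  -- camera extrinsics
    (p : Fin n → ℝ → Vec3)                         -- landmarks
    -- the curve remains in the total space 𝒯 :
    (hmem : ∀ t : ℝ, SO3 (RB t) ∧ SO3 (T t).1 ∧
      ∀ i, SE3.act (SE3.inv (SE3.mul (RB t, xB t) (T t))) (p i t) ≠ 0)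
    -- the VI-SLAM dynamics :
    (hR : ∀ t, HasDerivAt RB (RB t * skew (Ω - bΩ t)) t)
    (hx : ∀ t, HasDerivAt xB (vB t) t)
    (hv : ∀ t, HasDerivAt vB (mulv (RB t) (a - ba t) + g • e3) t)
    (hbΩ : ∀ t, HasDerivAt bΩ 0 t)
    (hba : ∀ t, HasDerivAt ba 0 t)
    (hT : ∀ t, HasDerivAt T 0 t)
    (hp : ∀ i, ∀ t, HasDerivAt (p i) 0 t)
    -- the change of reference frame :
    (S : SE3) (hS : SEe3 S) :
    (∀ t, HasDerivAt (fun t => (SE3.mul (SE3.inv S) (RB t, xB t)).1)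
      ((SE3.mul (SE3.inv S) (RB t, xB t)).1 * skew (Ω - bΩ t)) t) ∧
    (∀ t, HasDerivAt (fun t => (SE3.mul (SE3.inv S) (RB t, xB t)).2)
      (mulv S.1ᵀ (vB t)) t) ∧
    (∀ t, HasDerivAt (fun t => mulv S.1ᵀ (vB t))
      (mulv (SE3.mul (SE3.inv S) (RB t, xB t)).1 (a - ba t) + g • e3) t) ∧
    (∀ t, HasDerivAt bΩ 0 t) ∧ (∀ t, HasDerivAt ba 0 t) ∧
    (∀ t, HasDerivAt T 0 t) ∧
    (∀ i, ∀ t, HasDerivAt (fun t => SE3.act (SE3.inv S) (p i t)) 0 t) :=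
  vislam_dynamics_invariant_under_alpha_general n g Ω a RB xB vB bΩ ba T p hR hx hv hbΩ hba hT hp S
    hS
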